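/- arXiv:1408.4085 — 2 statements merged into one kernel-verified Lean document; each statement's English description precedes it below -/
import Mathlib

section
/- If ς is the minimal length representative of a right coset W_I ς in a Coxeter group W, then for every w ∈ W_I the map v ↦ vς is an order isomorphism from the Bruhat interval [e, w] in W_I onto the Bruhat interval [ς, wς] in W. -/
open CoxeterSystem

variable {B W : Type*} [Group W] {M : CoxeterMatrix B}

/-- The Bruhat order on a Coxeter group: `u ≤ w` iff `w` is obtained from `u` by
repeatedly multiplying on the right by reflections that increase length. -/
def bruhatLE (cs : CoxeterSystem M W) (u w : W) : Prop :=
  Relation.ReflTransGen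
    (fun a b => cs.length a < cs.length b ∧ ∃ t, cs.IsReflection t ∧ b = a * t) u w

/-- The standard parabolic subgroup generated by the simple reflections indexed by `I`. -/
def parabolic (cs : CoxeterSystem M W) (I : Set B) : Subgroup W :=
  Subgroup.closure (cs.simple '' I)

/-- `ς` is a minimal length representative of its right coset `W_I ς`. -/
def IsMinCosetRep (cs : CoxeterSystem M W) (I : Set B) (ς : W) : Prop :=
  ∀ u ∈ parabolic cs I, cs.length ς ≤ cs.length (u * ς)

/-!
Strong exchange comes from Tits' permutation representation of `W` on `W × ZMod 2`, in which
`s i` conjugates the first coordinate and flips the sign exactly at `s i`. The sign that `(t, 0)`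
picks up under `w` is the parity of the occurrences of `t` in the right inversion sequence of any
word for `w`, and for a reflection `t` it is `1` exactly when `ℓ (w * t) < ℓ w`. Strong exchange
gives the subword property and the lifting property of the Bruhat order: if `x ≤ y` then
`x * s i ≤ y` or `x * s i ≤ y * s i`.

For `ς` minimal in `W_I ς` lengths add, `ℓ (v * ς) = ℓ v + ℓ ς` for `v ∈ W_I`, so `v ↦ v * ς`
turns length-increasing reflection steps into length-increasing reflection steps. The converse
directions go by induction on `ℓ ς`, removing a right descent `s i` of `ς`: `ς * s i` is again
minimal, `s i` is a descent of every `v * ς`, and lifting transports the Bruhat relations. An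
element of `[ς, w * ς]` outside `W_I ς` would give `ς ≤ v * (ς * s i)`, which the subword
property and the minimality of `ς` rule out.
-/

namespace CoxeterSystem

variable (cs : CoxeterSystem M W)

local prefix:100 "s" => cs.simple
local prefix:100 "π" => cs.wordProd
local prefix:100 "ℓ" => cs.length
local prefix:100 "ris" => cs.rightInvSeq
local prefix:100 "lis" => cs.leftInvSeq

theorem alternatingWord_two_mul_succ (i j : B) (m : ℕ) :
    alternatingWord i j (2 * (m + 1)) = i :: j :: alternatingWord i j (2 * m) := by
  rw [show 2 * (m + 1) = 2 * m + 1 + 1 by ring, alternatingWord_succ', alternatingWord_succ']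
  simp

theorem reverse_alternatingWord_two_mul (i j : B) (m : ℕ) :
    (alternatingWord i j (2 * m)).reverse = alternatingWord j i (2 * m) := by
  apply List.ext_getElem (by simp)
  intro k h₁ h₂
  simp only [List.length_reverse, length_alternatingWord] at h₁
  rw [List.getElem_reverse, getElem_alternatingWord _ _ _ _ (by simp; omega),
    getElem_alternatingWord _ _ _ _ h₁]
  simp only [length_alternatingWord]
  have : Even (2 * m + (2 * m - 1 - k)) ↔ ¬ Even (2 * m + k) := by
    rw [← Nat.even_add_one, show 2 * m + (2 * m - 1 - k) = 2 * (2 * m - 1 - k) + (k + 1) by omega]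
    simp [Nat.even_add, parity_simps]
  split_ifs <;> tauto

theorem prod_map_alternatingWord_two_mul {G : Type*} [Monoid G] (f : B → G) (i j : B) (m : ℕ) :
    ((alternatingWord i j (2 * m)).map f).prod = (f i * f j) ^ m := by
  induction m with
  | zero => simp [alternatingWord]
  | succ m ih => rw [alternatingWord_two_mul_succ, pow_succ', ← ih]; simp [mul_assoc]

theorem wordProd_alternatingWord_two_mul (i j : B) (m : ℕ) :
    π (alternatingWord i j (2 * m)) = (s i * s j) ^ m :=
  prod_map_alternatingWord_two_mul cs.simple i j m

theorem leftInvSeq_alternatingWord_two_mul (i j : B) (m : ℕ) :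
    lis (alternatingWord i j (2 * m)) =
      (List.range (2 * m)).map fun k => s i * (s j * s i) ^ k := by
  apply List.ext_getElem (by simp)
  intro k h₁ h₂
  rw [getElem_leftInvSeq_alternatingWord cs i j m k (by simpa using h₁),
    prod_alternatingWord_eq_mul_pow]
  simp [Nat.mul_add_div]

theorem count_rightInvSeq_alternatingWord [DecidableEq W] (i j : B) (t : W) :
    ((ris (alternatingWord i j (2 * M i j))).count t : ZMod 2) = 0 := by
  -- the sequence is `M i j`-periodic since `(s i * s j) ^ M i j = 1`, so it is a list doubled
  rw [← reverse_alternatingWord_two_mul, rightInvSeq_reverse, List.count_reverse,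
    leftInvSeq_alternatingWord_two_mul, two_mul, List.range_add, List.map_append,
    List.count_append, List.map_map]
  simp only [Function.comp_def, pow_add, simple_mul_simple_pow, one_mul, Nat.cast_add]
  exact CharTwo.add_self_eq_zero _

section PermutationRepresentation

variable [DecidableEq W]

def simpleInvolution (i : B) (p : W × ZMod 2) : W × ZMod 2 :=
  (s i * p.1 * s i, p.2 + if p.1 = s i then 1 else 0)

theorem simpleInvolution_involutive (i : B) : Function.Involutive (cs.simpleInvolution i) := by
  rintro ⟨t, ε⟩
  have hconj : s i * (s i * t * s i) * s i = t := by simp [mul_assoc]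
  have hfix : s i * t * s i = s i ↔ t = s i := by
    constructor
    · intro h; rw [← hconj, h]; simp
    · rintro rfl; simp
  simp only [simpleInvolution, hconj, hfix, add_assoc, CharTwo.add_self_eq_zero, add_zero]

theorem prod_map_simpleInvolution_apply (ω : List B) (t : W) (ε : ZMod 2) :
    (ω.map fun i => (cs.simpleInvolution_involutive i).toPerm).prod (t, ε) =
      (π ω * t * (π ω)⁻¹, ε + (ris ω).count t) := by
  induction ω generalizing t ε with
  | nil => simp
  | cons i ω ih =>
    have hmem : π ω * t * (π ω)⁻¹ = s i ↔ (π ω)⁻¹ * s i * π ω = t := by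
      constructor <;> intro h <;> rw [← h] <;> group
    simp only [List.map_cons, List.prod_cons, Equiv.Perm.coe_mul, Function.comp_apply, ih,
      Function.Involutive.coe_toPerm, simpleInvolution, wordProd_cons, rightInvSeq,
      List.count_cons, beq_iff_eq, hmem]
    refine Prod.ext ?_ ?_
    · simp [mul_assoc]
    · push_cast; ring

theorem simpleInvolution_isLiftable :
    M.IsLiftable fun i => (cs.simpleInvolution_involutive i).toPerm := by
  intro i j
  rw [← prod_map_alternatingWord_two_mul (fun i => (cs.simpleInvolution_involutive i).toPerm)]
  refine Equiv.ext fun ⟨t, ε⟩ => ?_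
  rw [prod_map_simpleInvolution_apply, wordProd_alternatingWord_two_mul, simple_mul_simple_pow,
    count_rightInvSeq_alternatingWord]
  simp

noncomputable def permRep : W →* Equiv.Perm (W × ZMod 2) :=
  cs.lift ⟨_, cs.simpleInvolution_isLiftable⟩

theorem permRep_wordProd_apply (ω : List B) (t : W) (ε : ZMod 2) :
    cs.permRep (π ω) (t, ε) = (π ω * t * (π ω)⁻¹, ε + (ris ω).count t) := by
  rw [← prod_map_simpleInvolution_apply, wordProd, map_list_prod, List.map_map]
  congr 3
  ext i : 1
  exact cs.lift_apply_simple _ i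

noncomputable def inversionParity (w t : W) : ZMod 2 := (cs.permRep w (t, 0)).2

theorem inversionParity_wordProd (ω : List B) (t : W) :
    cs.inversionParity (π ω) t = (ris ω).count t := by
  simp [inversionParity, permRep_wordProd_apply]

theorem permRep_apply (w t : W) (ε : ZMod 2) :
    cs.permRep w (t, ε) = (w * t * w⁻¹, ε + cs.inversionParity w t) := by
  obtain ⟨ω, rfl⟩ := cs.wordProd_surjective w
  rw [permRep_wordProd_apply, inversionParity_wordProd]

theorem inversionParity_mul (u v t : W) :
    cs.inversionParity (u * v) t =
      cs.inversionParity v t + cs.inversionParity u (v * t * v⁻¹) := by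
  have h : (cs.permRep (u * v) (t, 0)).2 = (cs.permRep u (cs.permRep v (t, 0))).2 := by
    rw [map_mul, Equiv.Perm.mul_apply]
  rw [permRep_apply, permRep_apply, permRep_apply] at h
  simpa using h

theorem inversionParity_one (t : W) : cs.inversionParity 1 t = 0 := by
  simpa using cs.inversionParity_wordProd [] t

theorem inversionParity_simple (i : B) : cs.inversionParity (s i) (s i) = 1 := by
  simpa [rightInvSeq] using cs.inversionParity_wordProd [i] (s i)

theorem inversionParity_self {t : W} (ht : cs.IsReflection t) : cs.inversionParity t t = 1 := by
  obtain ⟨u, i, rfl⟩ := ht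
  have h₁ := cs.inversionParity_mul u u⁻¹ (u * s i * u⁻¹)
  have h₂ := cs.inversionParity_mul (u * s i) u⁻¹ (u * s i * u⁻¹)
  have h₃ := cs.inversionParity_mul u (s i) (s i)
  have hconj : u⁻¹ * (u * s i * u⁻¹) * u = s i := by group
  simp only [mul_inv_cancel, inversionParity_one, inv_inv, hconj] at h₁ h₂
  simp only [inv_simple, mul_assoc, simple_mul_simple_cancel_left, inversionParity_simple] at h₃
  linear_combination h₂ + h₃ - h₁

theorem inversionParity_add_inversionParity_mul {t : W} (ht : cs.IsReflection t) (w : W) :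
    cs.inversionParity w t + cs.inversionParity (w * t) t = 1 := by
  have := cs.inversionParity_mul (w * t) t t
  simp only [ht.mul_self, mul_assoc, mul_one, one_mul, ht.inv, inversionParity_self cs ht] at this
  rw [this, add_assoc, CharTwo.add_self_eq_zero, add_zero]

theorem mem_rightInvSeq_of_inversionParity_eq_one {ω : List B} {t : W}
    (h : cs.inversionParity (π ω) t = 1) : t ∈ ris ω := by
  by_contra hmem
  rw [inversionParity_wordProd, List.count_eq_zero_of_not_mem hmem] at h
  exact zero_ne_one h

theorem inversionParity_eq_one_iff {t : W} (ht : cs.IsReflection t) (w : W) :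
    cs.inversionParity w t = 1 ↔ cs.IsRightInversion w t := by
  have length_lt {w : W} (h : cs.inversionParity w t = 1) : ℓ (w * t) < ℓ w := by
    obtain ⟨ω, hω, rfl⟩ := cs.exists_isReduced w
    exact (cs.isRightInversion_of_mem_rightInvSeq hω
      (cs.mem_rightInvSeq_of_inversionParity_eq_one h)).2
  refine ⟨fun h => ⟨ht, length_lt h⟩, fun h => ?_⟩
  by_contra hne
  have hmul : cs.inversionParity (w * t) t = 1 := by
    have key : ∀ a b : ZMod 2, a + b = 1 → a ≠ 1 → b = 1 := by decide
    exact key _ _ (cs.inversionParity_add_inversionParity_mul ht w) hne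
  have := length_lt hmul
  rw [mul_assoc, ht.mul_self, mul_one] at this
  exact lt_asymm h.2 this

end PermutationRepresentation

theorem exists_eraseIdx_of_isRightInversion {ω : List B} {t : W}
    (h : cs.IsRightInversion (π ω) t) : ∃ j < ω.length, π ω * t = π (ω.eraseIdx j) := by
  classical
  obtain ⟨j, hj, rfl⟩ := List.mem_iff_getElem.mp (cs.mem_rightInvSeq_of_inversionParity_eq_one
    ((cs.inversionParity_eq_one_iff h.1 _).mpr h))
  rw [length_rightInvSeq] at hj
  exact ⟨j, hj, by rw [← List.getD_eq_getElem _ 1, wordProd_mul_getD_rightInvSeq]⟩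

theorem exists_reduced_sublist (ω : List B) :
    ∃ ω' : List B, ω'.Sublist ω ∧ cs.IsReduced ω' ∧ π ω' = π ω := by
  induction ω using List.reverseRecOn with
  | nil => exact ⟨[], List.Sublist.refl _, by simp [IsReduced], rfl⟩
  | append_singleton ω i ih =>
    obtain ⟨ρ, hsub, hred, hprod⟩ := ih
    have hρ : ℓ (π ρ) = ρ.length := hred
    rw [wordProd_append, wordProd_singleton, ← hprod]
    rcases cs.length_mul_simple (π ρ) i with hasc | hdesc
    · refine ⟨ρ ++ [i], hsub.append (List.Sublist.refl _), ?_, by simp [wordProd_append]⟩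
      simp [IsReduced, wordProd_append, hasc, hρ]
    · obtain ⟨j, hj, hjρ⟩ :=
        cs.exists_eraseIdx_of_isRightInversion (ω := ρ) ⟨cs.isReflection_simple i, by omega⟩
      refine ⟨ρ.eraseIdx j, (List.eraseIdx_sublist ρ j).trans
        (hsub.trans (List.sublist_append_left _ _)), ?_, hjρ.symm⟩
      have := List.length_eraseIdx_add_one hj
      rw [IsReduced, ← hjρ]
      omega

theorem eq_simple_or_length_mul_mul_simple_lt {z t : W} (ht : cs.IsRightInversion z t) (i : B) :
    t = s i ∨ ℓ (z * t * s i) < ℓ (z * s i) := by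
  obtain ⟨κ, hκ, hzκ⟩ := cs.exists_isReduced (z * s i)
  have hz : π (κ ++ [i]) = z := by simp [wordProd_append, ← hzκ]
  obtain ⟨j, hj, hjκ⟩ := cs.exists_eraseIdx_of_isRightInversion (hz ▸ ht)
  rw [hz] at hjκ
  rw [List.length_append, List.length_singleton] at hj
  rcases Nat.lt_succ_iff_lt_or_eq.mp hj with hj | rfl
  · right
    rw [List.eraseIdx_append_of_lt_length hj, wordProd_append, wordProd_singleton] at hjκ
    have hzts : z * t * s i = π (κ.eraseIdx j) := by rw [hjκ, simple_mul_simple_cancel_right]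
    have hlen := cs.length_wordProd_le (κ.eraseIdx j)
    have := List.length_eraseIdx_add_one hj
    have : ℓ (z * s i) = κ.length := hzκ ▸ hκ
    rw [hzts]
    omega
  · left
    simp only [List.eraseIdx_append_of_length_le le_rfl, Nat.sub_self, List.eraseIdx_cons_zero,
      List.append_nil, ← hzκ] at hjκ
    exact mul_left_cancel hjκ

end CoxeterSystem

section Bruhat

variable (cs : CoxeterSystem M W)

local prefix:100 "s" => cs.simple
local prefix:100 "π" => cs.wordProd
local prefix:100 "ℓ" => cs.length

theorem bruhatLE_refl (w : W) : bruhatLE cs w w := Relation.ReflTransGen.refl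

variable {cs} in
theorem bruhatLE.trans {x y z : W} (h₁ : bruhatLE cs x y) (h₂ : bruhatLE cs y z) :
    bruhatLE cs x z :=
  Relation.ReflTransGen.trans h₁ h₂

theorem bruhatLE_of_isReflection_inv_mul {x y : W} (ht : cs.IsReflection (x⁻¹ * y))
    (h : ℓ x < ℓ y) : bruhatLE cs x y :=
  Relation.ReflTransGen.single ⟨h, _, ht, by group⟩

theorem self_bruhatLE_mul_simple {x : W} {i : B} (h : ℓ x < ℓ (x * s i)) :
    bruhatLE cs x (x * s i) :=
  bruhatLE_of_isReflection_inv_mul cs (by simpa using cs.isReflection_simple i) h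

theorem mul_simple_bruhatLE {x : W} {i : B} (h : ℓ (x * s i) < ℓ x) : bruhatLE cs (x * s i) x :=
  bruhatLE_of_isReflection_inv_mul cs (by simpa using cs.isReflection_simple i) h

theorem mul_simple_bruhatLE_mul_mul_simple {x t : W} (i : B) (ht : cs.IsReflection t)
    (h : ℓ (x * s i) < ℓ (x * t * s i)) : bruhatLE cs (x * s i) (x * t * s i) :=
  bruhatLE_of_isReflection_inv_mul cs (by simpa [mul_assoc] using ht.conj (s i)) h

theorem one_bruhatLE (w : W) : bruhatLE cs 1 w := by
  induction hn : ℓ w using Nat.strong_induction_on generalizing w with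
  | _ n ih =>
    by_cases hw : w = 1
    · rw [hw]; exact bruhatLE_refl cs 1
    · obtain ⟨i, hi⟩ := cs.exists_rightDescent_of_ne_one hw
      exact (ih _ (hn ▸ hi) _ rfl).trans (mul_simple_bruhatLE cs hi)

variable {cs}

theorem bruhatLE.exists_sublist {u : W} {ω : List B} (h : bruhatLE cs u (π ω)) :
    ∃ ω' : List B, ω'.Sublist ω ∧ π ω' = u := by
  generalize hy : π ω = y at h
  induction h using Relation.ReflTransGen.head_induction_on with
  | refl => exact ⟨ω, List.Sublist.refl ω, hy⟩
  | head hstep _ ih =>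
    obtain ⟨ω', hsub, rfl⟩ := ih
    obtain ⟨hlt, t, ht, hc⟩ := hstep
    have hinv : cs.IsRightInversion (π ω') t :=
      ⟨ht, by rwa [hc, mul_assoc, ht.mul_self, mul_one, ← hc]⟩
    obtain ⟨j, -, hj⟩ := cs.exists_eraseIdx_of_isRightInversion hinv
    exact ⟨ω'.eraseIdx j, (List.eraseIdx_sublist ω' j).trans hsub,
      by rw [← hj, hc, mul_assoc, ht.mul_self, mul_one]⟩

theorem bruhatLE.mul_simple_le_or {x y : W} (h : bruhatLE cs x y) (i : B) :
    bruhatLE cs (x * s i) y ∨ bruhatLE cs (x * s i) (y * s i) := by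
  induction h with
  | refl => exact Or.inr (bruhatLE_refl cs _)
  | @tail b _ _ hstep ih =>
    obtain ⟨hlt, t, ht, rfl⟩ := hstep
    have hbt : bruhatLE cs b (b * t) := bruhatLE_of_isReflection_inv_mul cs (by simpa) hlt
    rcases ih with h | h
    · exact Or.inl (h.trans hbt)
    by_cases hasc : ℓ (b * s i) < ℓ (b * t * s i)
    · exact Or.inr (h.trans (mul_simple_bruhatLE_mul_mul_simple cs i ht hasc))
    have hinv : cs.IsRightInversion (b * t) t := ⟨ht, by rwa [mul_assoc, ht.mul_self, mul_one]⟩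
    rcases cs.eq_simple_or_length_mul_mul_simple_lt hinv i with rfl | hlt'
    · exact Or.inl h
    · rw [mul_assoc b t t, ht.mul_self, mul_one] at hlt'
      exact absurd hlt' hasc

theorem bruhatLE.le_mul_simple {x z : W} {i : B} (h : bruhatLE cs x z)
    (hx : ℓ x < ℓ (x * s i)) (hz : ℓ (z * s i) < ℓ z) : bruhatLE cs x (z * s i) := by
  induction h with
  | refl => exact absurd hx (not_lt.mpr hz.le)
  | @tail b _ hxb hstep ih =>
    obtain ⟨hlt, t, ht, rfl⟩ := hstep
    have hinv : cs.IsRightInversion (b * t) t := ⟨ht, by rwa [mul_assoc, ht.mul_self, mul_one]⟩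
    rcases cs.eq_simple_or_length_mul_mul_simple_lt hinv i with rfl | hlt'
    · rwa [simple_mul_simple_cancel_right]
    rw [mul_assoc b t t, ht.mul_self, mul_one] at hlt'
    have hxbs : bruhatLE cs x (b * s i) := by
      rcases lt_or_gt_of_ne (cs.length_mul_simple_ne b i) with hb | hb
      · exact ih hb
      have hxxs := self_bruhatLE_mul_simple cs hx
      rcases bruhatLE.mul_simple_le_or hxb i with h | h
      · exact hxxs.trans (h.trans (self_bruhatLE_mul_simple cs hb))
      · exact hxxs.trans h
    exact hxbs.trans (mul_simple_bruhatLE_mul_mul_simple cs i ht hlt')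

theorem bruhatLE_of_mul_simple_le_mul_simple {x y : W} {i : B}
    (h : bruhatLE cs (x * s i) (y * s i)) (hx : ℓ x < ℓ (x * s i)) (hy : ℓ y < ℓ (y * s i)) :
    bruhatLE cs x y := by
  have hy' : ℓ (y * s i * s i) < ℓ (y * s i) := by rwa [simple_mul_simple_cancel_right]
  rcases h.mul_simple_le_or i with h' | h' <;> simp only [simple_mul_simple_cancel_right] at h'
  · simpa using h'.le_mul_simple hx hy'
  · exact h'

theorem bruhatLE.mul_simple_le_mul_simple {x y : W} {i : B} (h : bruhatLE cs x y)
    (hx : ℓ (x * s i) < ℓ x) (hy : ℓ (y * s i) < ℓ y) : bruhatLE cs (x * s i) (y * s i) := by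
  rcases h.mul_simple_le_or i with h' | h'
  · exact h'.le_mul_simple (by rwa [simple_mul_simple_cancel_right]) hy
  · exact h'

end Bruhat

section Parabolic

variable (cs : CoxeterSystem M W) {I : Set B}

local prefix:100 "s" => cs.simple
local prefix:100 "π" => cs.wordProd
local prefix:100 "ℓ" => cs.length

theorem wordProd_mem_parabolic {ω : List B} (hω : ∀ i ∈ ω, i ∈ I) : π ω ∈ parabolic cs I := by
  induction ω with
  | nil => exact one_mem _
  | cons i ω ih =>
    rw [wordProd_cons]
    exact mul_mem (Subgroup.subset_closure ⟨i, hω i List.mem_cons_self, rfl⟩)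
      (ih fun j hj => hω j (List.mem_cons_of_mem i hj))

theorem exists_word_of_mem_parabolic {u : W} (hu : u ∈ parabolic cs I) :
    ∃ ω : List B, (∀ i ∈ ω, i ∈ I) ∧ π ω = u := by
  induction hu using Subgroup.closure_induction with
  | mem x hx =>
    obtain ⟨i, hi, rfl⟩ := hx
    exact ⟨[i], by simpa using hi, cs.wordProd_singleton i⟩
  | one => exact ⟨[], by simp, cs.wordProd_nil⟩
  | mul x y _ _ ihx ihy =>
    obtain ⟨ω₁, h₁, rfl⟩ := ihx
    obtain ⟨ω₂, h₂, rfl⟩ := ihy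
    refine ⟨ω₁ ++ ω₂, fun i hi => ?_, cs.wordProd_append ω₁ ω₂⟩
    rcases List.mem_append.mp hi with hi | hi
    exacts [h₁ i hi, h₂ i hi]
  | inv x _ ihx =>
    obtain ⟨ω, hω, rfl⟩ := ihx
    exact ⟨ω.reverse, fun i hi => hω i (List.mem_reverse.mp hi), cs.wordProd_reverse ω⟩

theorem mem_parabolic_of_bruhatLE {z w : W} (hw : w ∈ parabolic cs I) (h : bruhatLE cs z w) :
    z ∈ parabolic cs I := by
  obtain ⟨ω, hω, rfl⟩ := exists_word_of_mem_parabolic cs hw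
  obtain ⟨ω', hsub, rfl⟩ := h.exists_sublist
  exact wordProd_mem_parabolic cs fun i hi => hω i (hsub.subset hi)

variable {cs}

theorem IsMinCosetRep.length_mul {ς u : W} (hς : IsMinCosetRep cs I ς)
    (hu : u ∈ parabolic cs I) : ℓ (u * ς) = ℓ u + ℓ ς := by
  refine le_antisymm (cs.length_mul_le u ς) ?_
  obtain ⟨ρ, hρ, rfl⟩ := exists_word_of_mem_parabolic cs hu
  obtain ⟨κ, hκ, rfl⟩ := cs.exists_isReduced ς
  obtain ⟨l, hl, hred, hprod⟩ := cs.exists_reduced_sublist (ρ ++ κ)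
  obtain ⟨l₁, l₂, rfl, h₁, h₂⟩ := List.sublist_append_iff.mp hl
  rw [wordProd_append, wordProd_append] at hprod
  have hl₂ : l₂ = κ := by
    have hmin := hς ((π l₁)⁻¹ * π ρ)
      (mul_mem (inv_mem (wordProd_mem_parabolic cs fun i hi => hρ i (h₁.subset hi))) hu)
    rw [mul_assoc, ← hprod, inv_mul_cancel_left] at hmin
    refine h₂.eq_of_length (le_antisymm h₂.length_le ?_)
    exact hκ ▸ hmin.trans (cs.length_wordProd_le l₂)
  subst hl₂
  have hl₁ : π l₁ = π ρ := mul_right_cancel hprod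
  calc ℓ (π ρ) + ℓ (π l₂) ≤ l₁.length + l₂.length := by
        rw [← hl₁, hκ]; exact Nat.add_le_add_right (cs.length_wordProd_le l₁) _
    _ = ℓ (π ρ * π l₂) := by rw [← hprod, ← wordProd_append, hred, List.length_append]

theorem IsMinCosetRep.mul_simple {ς : W} {i : B} (hς : IsMinCosetRep cs I ς)
    (hi : ℓ (ς * s i) < ℓ ς) : IsMinCosetRep cs I (ς * s i) := by
  intro u hu
  have h₁ := hς.length_mul hu
  have h₂ := cs.length_mul_le (u * (ς * s i)) (s i)
  rw [mul_assoc, simple_mul_simple_cancel_right, cs.length_simple] at h₂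
  omega

theorem IsMinCosetRep.length_mul_mul_simple_lt {ς v : W} {i : B} (hς : IsMinCosetRep cs I ς)
    (hv : v ∈ parabolic cs I) (hi : ℓ (ς * s i) < ℓ ς) : ℓ (v * ς * s i) < ℓ (v * ς) := by
  rw [mul_assoc, (hς.mul_simple hi).length_mul hv, hς.length_mul hv]
  omega

theorem IsMinCosetRep.induction_on {P : W → Prop} {ς : W} (hς : IsMinCosetRep cs I ς)
    (one : P 1)
    (mul_simple : ∀ ς i, IsMinCosetRep cs I ς → ℓ (ς * s i) < ℓ ς → P (ς * s i) → P ς) :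
    P ς := by
  induction hn : ℓ ς using Nat.strong_induction_on generalizing ς with
  | _ n ih =>
    by_cases h1 : ς = 1
    · exact h1 ▸ one
    obtain ⟨i, hi⟩ := cs.exists_rightDescent_of_ne_one h1
    exact mul_simple ς i hς hi (ih _ (hn ▸ hi) (hς.mul_simple hi) rfl)

theorem IsMinCosetRep.length_le_of_bruhatLE_mul {ς v x : W} (hς : IsMinCosetRep cs I ς)
    (hv : v ∈ parabolic cs I) (h : bruhatLE cs ς (v * x)) : ℓ ς ≤ ℓ x := by
  obtain ⟨ρ, hρ, rfl⟩ := exists_word_of_mem_parabolic cs hv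
  obtain ⟨κ, hκ, rfl⟩ := cs.exists_isReduced x
  rw [← wordProd_append] at h
  obtain ⟨l, hl, hlς⟩ := h.exists_sublist
  obtain ⟨l₁, l₂, rfl, h₁, h₂⟩ := List.sublist_append_iff.mp hl
  have hl₂ : (π l₁)⁻¹ * ς = π l₂ := by rw [← hlς, wordProd_append, inv_mul_cancel_left]
  calc ℓ ς ≤ ℓ ((π l₁)⁻¹ * ς) :=
        hς _ (inv_mem (wordProd_mem_parabolic cs fun i hi => hρ i (h₁.subset hi)))
    _ ≤ l₂.length := hl₂ ▸ cs.length_wordProd_le l₂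
    _ ≤ ℓ (π κ) := hκ ▸ h₂.length_le

theorem IsMinCosetRep.mul_bruhatLE_mul {ς v w : W} (hς : IsMinCosetRep cs I ς)
    (hw : w ∈ parabolic cs I) (h : bruhatLE cs v w) : bruhatLE cs (v * ς) (w * ς) := by
  induction h using Relation.ReflTransGen.head_induction_on with
  | refl => exact bruhatLE_refl cs _
  | head hstep hcw ih =>
    obtain ⟨hlt, t, ht, rfl⟩ := hstep
    have hc := mem_parabolic_of_bruhatLE cs hw hcw
    have ha := mem_parabolic_of_bruhatLE cs hc
      (bruhatLE_of_isReflection_inv_mul cs (by simpa) hlt)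
    refine (bruhatLE_of_isReflection_inv_mul cs ?_ ?_).trans ih
    · simpa [mul_assoc] using ht.conj ς⁻¹
    · rw [hς.length_mul ha, hς.length_mul hc]
      omega

theorem IsMinCosetRep.bruhatLE_of_mul_bruhatLE_mul {ς v w : W} (hς : IsMinCosetRep cs I ς)
    (hv : v ∈ parabolic cs I) (hw : w ∈ parabolic cs I)
    (h : bruhatLE cs (v * ς) (w * ς)) : bruhatLE cs v w := by
  revert v w
  apply hς.induction_on
  · intro v w _ _ h
    simpa using h
  intro ς i hς hi ih v w hv hw h
  refine ih hv hw ?_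
  rw [← mul_assoc, ← mul_assoc]
  apply bruhatLE_of_mul_simple_le_mul_simple (i := i) <;>
    simp only [simple_mul_simple_cancel_right]
  exacts [h, hς.length_mul_mul_simple_lt hv hi, hς.length_mul_mul_simple_lt hw hi]

theorem IsMinCosetRep.mul_bruhatLE_mul_iff {ς v w : W} (hς : IsMinCosetRep cs I ς)
    (hv : v ∈ parabolic cs I) (hw : w ∈ parabolic cs I) :
    bruhatLE cs (v * ς) (w * ς) ↔ bruhatLE cs v w :=
  ⟨hς.bruhatLE_of_mul_bruhatLE_mul hv hw, hς.mul_bruhatLE_mul hw⟩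

theorem IsMinCosetRep.exists_eq_mul_of_bruhatLE {ς w u : W} (hς : IsMinCosetRep cs I ς)
    (hw : w ∈ parabolic cs I) (h₁ : bruhatLE cs ς u) (h₂ : bruhatLE cs u (w * ς)) :
    ∃ v ∈ parabolic cs I, u = v * ς := by
  revert u
  apply hς.induction_on
  · intro u _ h₂
    rw [mul_one] at h₂
    exact ⟨u, mem_parabolic_of_bruhatLE cs hw h₂, (mul_one u).symm⟩
  intro ς i hς hi ih u h₁ h₂
  have hwς : ℓ (w * ς * s i) < ℓ (w * ς) := hς.length_mul_mul_simple_lt hw hi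
  rcases lt_or_gt_of_ne (cs.length_mul_simple_ne u i) with hu | hu
  · obtain ⟨v, hv, huv⟩ := ih (h₁.mul_simple_le_mul_simple hi hu)
      (by simpa [mul_assoc] using h₂.mul_simple_le_mul_simple hu hwς)
    exact ⟨v, hv, by simpa [mul_assoc] using congrArg (· * s i) huv⟩
  · obtain ⟨v, hv, rfl⟩ := ih ((mul_simple_bruhatLE cs hi).trans h₁)
      (by simpa [mul_assoc] using h₂.le_mul_simple hu hwς)
    exact absurd (hς.length_le_of_bruhatLE_mul hv h₁) (not_le.mpr hi)

end Parabolic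

/-- For ς the minimal length representative of the right coset W_I ς and w ∈ W_I, the map
v ↦ vς is an order isomorphism from the Bruhat interval [e, w] in W_I onto the Bruhat
interval [ς, wς] in W. -/
theorem bruhat_interval_orderIso (cs : CoxeterSystem M W) (I : Set B) (ς : W)
    (hς : IsMinCosetRep cs I ς) (w : W) (hw : w ∈ parabolic cs I) :
    Set.BijOn (· * ς)
      {v | v ∈ parabolic cs I ∧ bruhatLE cs 1 v ∧ bruhatLE cs v w}
      {u | bruhatLE cs ς u ∧ bruhatLE cs u (w * ς)} ∧
    ∀ v₁ ∈ {v | v ∈ parabolic cs I ∧ bruhatLE cs 1 v ∧ bruhatLE cs v w},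
      ∀ v₂ ∈ {v | v ∈ parabolic cs I ∧ bruhatLE cs 1 v ∧ bruhatLE cs v w},
        (bruhatLE cs v₁ v₂ ↔ bruhatLE cs (v₁ * ς) (v₂ * ς)) := by
  refine ⟨⟨?mapsTo, (mul_left_injective ς).injOn, ?surjOn⟩, ?le_iff⟩
  case mapsTo =>
    rintro v ⟨hv, -, hvw⟩
    exact ⟨by simpa using hς.mul_bruhatLE_mul hv (one_bruhatLE cs v),
      hς.mul_bruhatLE_mul hw hvw⟩
  case surjOn =>
    rintro u ⟨h₁, h₂⟩
    obtain ⟨v, hv, rfl⟩ := hς.exists_eq_mul_of_bruhatLE hw h₁ h₂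
    exact ⟨v, ⟨hv, one_bruhatLE cs v, (hς.mul_bruhatLE_mul_iff hv hw).mp h₂⟩, rfl⟩
  case le_iff =>
    rintro v₁ ⟨hv₁, -⟩ v₂ ⟨hv₂, -⟩
    exact (hς.mul_bruhatLE_mul_iff hv₁ hv₂).symm
end

section
/- Let ς be a minimal length right coset representative of W_I in W and let u ∈ W with u ≤ wς for some w ∈ W_I. If additionally ς ≤ u, then there exists a unique v ∈ W_I with v ≤ w and u = vς. -/
open CoxeterSystem

variable {B W : Type*} [Group W] {M : CoxeterMatrix B}

/-!
Write `w` as a reduced word `s_{i₁} ⋯ s_{iₖ}` with all `iⱼ ∈ I` and induct on `k`, peeling off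
`s = s_{i₁}` with the lifting property of the Bruhat order: `x ≤ y` implies both
(`s x ≤ y` or `s x ≤ s y`) and (`x ≤ s y` or `s x ≤ s y`). If `s u < u`, this gives `s u ≤ s w ς`
and, since `ς` has no left descent in `I`, `ς ≤ s u`; by induction `s u = v' ς` with `v' ≤ s w`,
and `v = s v'` works. Otherwise `u ≤ s w ς` and induction applies directly. Uniqueness is
cancellation.

The lifting property is proved along a Bruhat chain from the strong exchange condition, which in
turn comes from the action of `W` on `W × ℤˣ` by conjugation twisted with a sign.
-/

namespace CoxeterSystem

variable (cs : CoxeterSystem M W)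

local prefix:100 "s " => cs.simple
local prefix:100 "π " => cs.wordProd
local prefix:100 "ℓ " => cs.length
local prefix:100 "ris " => cs.rightInvSeq
local prefix:100 "lis " => cs.leftInvSeq

theorem alternatingWord_two_mul_add_two (i j : B) (m : ℕ) :
    alternatingWord i j (2 * m + 2) = i :: j :: alternatingWord i j (2 * m) := by
  rw [alternatingWord_succ', alternatingWord_succ']
  simp

section FlipRepresentation

variable [DecidableEq W]

theorem even_count_rightInvSeq_alternatingWord (i j : B) (t : W) :
    Even ((ris (alternatingWord i j (2 * M i j))).count t) := by
  set m := M i j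
  set L := lis (alternatingWord j i (2 * m))
  have hL : L.length = 2 * m := by simp [L]
  -- the `k`-th entry of `L` is `π (alternatingWord i j (2 * k + 1))`, which has period `m` in `k`
  have hperiod : L.drop m = L.take m := by
    refine List.ext_getElem (by simp only [List.length_drop, List.length_take, hL]; omega)
      fun k hk _ => ?_
    simp only [List.length_drop, hL] at hk
    simp only [List.getElem_drop, List.getElem_take, L]
    rw [getElem_leftInvSeq_alternatingWord _ _ _ _ _ (by omega),
      getElem_leftInvSeq_alternatingWord _ _ _ _ _ (by omega), prod_alternatingWord_eq_mul_pow,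
      prod_alternatingWord_eq_mul_pow, show (2 * (m + k) + 1) / 2 = k + m by omega,
      show (2 * k + 1) / 2 = k by omega, pow_add, simple_mul_simple_pow, mul_one]
    simp
  have hcount : (ris (alternatingWord i j (2 * m))).count t = L.count t := by
    rw [← reverse_alternatingWord_two_mul, rightInvSeq_reverse, List.count_reverse]
  rw [hcount, ← List.take_append_drop m L, List.count_append, hperiod]
  exact ⟨_, rfl⟩

def simpleFlip (i : B) : Equiv.Perm (W × ℤˣ) :=
  Function.Involutive.toPerm (fun p => (s i * p.1 * s i, if p.1 = s i then -p.2 else p.2)) <| by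
    rintro ⟨t, e⟩
    by_cases ht : t = s i <;> simp [ht, mul_assoc, mul_eq_one_iff_eq_inv]

@[simp]
theorem simpleFlip_apply (i : B) (t : W) (e : ℤˣ) :
    cs.simpleFlip i (t, e) = (s i * t * s i, if t = s i then -e else e) := rfl

theorem prod_map_simpleFlip_apply (ω : List B) (t : W) (e : ℤˣ) :
    (ω.map cs.simpleFlip).prod (t, e) = (π ω * t * (π ω)⁻¹, (-1) ^ (ris ω).count t * e) := by
  induction ω with
  | nil => simp
  | cons i ω ih =>
    have hconj : π ω * t * (π ω)⁻¹ = s i ↔ (π ω)⁻¹ * s i * π ω = t := by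
      constructor <;> rintro h <;> simp [← h, mul_assoc]
    simp only [List.map_cons, List.prod_cons, Equiv.Perm.mul_apply, ih, simpleFlip_apply, hconj,
      rightInvSeq, List.count_cons, beq_iff_eq]
    refine Prod.ext (by simp [wordProd_cons, mul_assoc]) ?_
    split_ifs <;> simp [pow_succ]

theorem isLiftable_simpleFlip : M.IsLiftable cs.simpleFlip := by
  intro i j
  have hbraid : π (alternatingWord i j (2 * M i j)) = 1 := by
    rw [wordProd, prod_map_alternatingWord_two_mul, simple_mul_simple_pow]
  refine Equiv.ext fun ⟨t, e⟩ => ?_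
  rw [← prod_map_alternatingWord_two_mul, prod_map_simpleFlip_apply, hbraid,
    (cs.even_count_rightInvSeq_alternatingWord i j t).neg_one_pow]
  simp

def flipRep : W →* Equiv.Perm (W × ℤˣ) := cs.lift ⟨cs.simpleFlip, cs.isLiftable_simpleFlip⟩

theorem flipRep_simple (i : B) : cs.flipRep (s i) = cs.simpleFlip i :=
  cs.lift_apply_simple cs.isLiftable_simpleFlip i

theorem flipRep_wordProd_apply (ω : List B) (t : W) (e : ℤˣ) :
    cs.flipRep (π ω) (t, e) = (π ω * t * (π ω)⁻¹, (-1) ^ (ris ω).count t * e) := by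
  rw [← prod_map_simpleFlip_apply, wordProd, map_list_prod, List.map_map]
  simp only [Function.comp_def, flipRep_simple]

theorem exists_flipRep_apply (w t : W) :
    ∃ η : ℤˣ, ∀ e, cs.flipRep w (t, e) = (w * t * w⁻¹, η * e) := by
  obtain ⟨ω, rfl⟩ := cs.wordProd_surjective w
  exact ⟨_, cs.flipRep_wordProd_apply ω t⟩

theorem flipRep_self_apply {t : W} (ht : cs.IsReflection t) (e : ℤˣ) :
    cs.flipRep t (t, e) = (t, -e) := by
  obtain ⟨q, i, rfl⟩ := ht
  obtain ⟨η, hη⟩ := cs.exists_flipRep_apply q (s i)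
  have hinv : (cs.flipRep q)⁻¹ (q * s i * q⁻¹, e) = (s i, η * e) := by
    rw [Equiv.Perm.inv_eq_iff_eq, hη, ← mul_assoc, Int.units_mul_self, one_mul]
  rw [map_mul, map_mul, map_inv, Equiv.Perm.mul_apply, Equiv.Perm.mul_apply, hinv, flipRep_simple,
    simpleFlip_apply, if_pos rfl, simple_mul_simple_self, one_mul, hη, mul_neg, ← mul_assoc,
    Int.units_mul_self, one_mul]

end FlipRepresentation

theorem mem_rightInvSeq_of_length_mul_lt {ω : List B} {t : W} (ht : cs.IsReflection t)
    (hlt : ℓ (π ω * t) < ℓ (π ω)) : t ∈ ris ω := by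
  classical
  by_contra hmem
  obtain ⟨ω', hω', hω't⟩ := cs.exists_isReduced (π ω * t)
  have hmem' : t ∉ ris ω' := fun h => by
    have := (cs.isRightInversion_of_mem_rightInvSeq hω' h).2
    rw [← hω't, mul_assoc, ht.mul_self, mul_one] at this
    omega
  -- compute `flipRep (π ω) (t, 1)` from `ω` (sign `1`) and from `π ω = π ω' * t` (sign `-1`)
  have key : cs.flipRep (π ω) (t, 1) = cs.flipRep (π ω') (t, -1) := by
    rw [← cs.flipRep_self_apply ht, ← Equiv.Perm.mul_apply, ← map_mul, ← hω't, mul_assoc,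
      ht.mul_self, mul_one]
  rw [flipRep_wordProd_apply, flipRep_wordProd_apply, List.count_eq_zero_of_not_mem hmem,
    List.count_eq_zero_of_not_mem hmem'] at key
  simp at key

theorem exists_wordProd_mul_eq_eraseIdx {ω : List B} {t : W} (ht : cs.IsReflection t)
    (hlt : ℓ (π ω * t) < ℓ (π ω)) : ∃ j < ω.length, π ω * t = π (ω.eraseIdx j) := by
  obtain ⟨j, hj, rfl⟩ := List.getElem_of_mem (cs.mem_rightInvSeq_of_length_mul_lt ht hlt)
  refine ⟨j, by simpa using hj, ?_⟩
  rw [← cs.wordProd_mul_getD_rightInvSeq, List.getD_eq_getElem]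

variable {cs} in
theorem IsReduced.cons {ω : List B} (hω : cs.IsReduced ω) {i : B}
    (hi : ¬cs.IsLeftDescent (π ω) i) : cs.IsReduced (i :: ω) := by
  rw [not_isLeftDescent_iff, hω] at hi
  rw [IsReduced, wordProd_cons, hi, List.length_cons]

theorem exists_isReduced_sublist (ω : List B) :
    ∃ ω', ω'.Sublist ω ∧ cs.IsReduced ω' ∧ π ω' = π ω := by
  induction ω with
  | nil => exact ⟨[], .slnil, by simp [IsReduced], rfl⟩
  | cons i ω ih =>
    obtain ⟨ρ, hρω, hρ, hπρ⟩ := ih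
    rw [wordProd_cons, ← hπρ]
    by_cases hi : cs.IsLeftDescent (π ρ) i
    · have ht : cs.IsReflection ((π ρ)⁻¹ * s i * π ρ) := by
        simpa using (cs.isReflection_simple i).conj (π ρ)⁻¹
      have hmul : π ρ * ((π ρ)⁻¹ * s i * π ρ) = s i * π ρ := by group
      obtain ⟨j, hj, hρj⟩ := cs.exists_wordProd_mul_eq_eraseIdx ht (by rwa [hmul])
      rw [hmul] at hρj
      refine ⟨ρ.eraseIdx j, (ρ.eraseIdx_sublist j).trans hρω |>.cons i, ?_, hρj.symm⟩
      rw [isLeftDescent_iff, hρ] at hi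
      rw [IsReduced, List.length_eraseIdx_of_lt hj, ← hρj]
      omega
    · exact ⟨i :: ρ, hρω.cons_cons i, hρ.cons hi, wordProd_cons ..⟩

theorem simple_mem_parabolic {I : Set B} {i : B} (hi : i ∈ I) : s i ∈ parabolic cs I :=
  Subgroup.subset_closure ⟨i, hi, rfl⟩

theorem exists_isReduced_of_mem_parabolic {I : Set B} {w : W} (hw : w ∈ parabolic cs I) :
    ∃ ω, (∀ i ∈ ω, i ∈ I) ∧ cs.IsReduced ω ∧ w = π ω := by
  obtain ⟨ω, hωI, rfl⟩ : ∃ ω : List B, (∀ i ∈ ω, i ∈ I) ∧ w = π ω := by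
    induction hw using Subgroup.closure_induction_left with
    | one => exact ⟨[], by simp, rfl⟩
    | mul_left _ hx _ _ ih | inv_mul_cancel _ hx _ _ ih =>
      obtain ⟨i, hi, rfl⟩ := hx
      obtain ⟨ω, hωI, rfl⟩ := ih
      exact ⟨i :: ω, by simpa [hi] using hωI, by simp [wordProd_cons]⟩
  obtain ⟨ω', hω'ω, hω', hπ⟩ := cs.exists_isReduced_sublist ω
  exact ⟨ω', fun i hi => hωI i (hω'ω.subset hi), hω', hπ.symm⟩

theorem length_le_of_bruhatLE {u w : W} (h : bruhatLE cs u w) : ℓ u ≤ ℓ w := by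
  induction h with
  | refl => rfl
  | tail _ hstep ih => exact ih.trans hstep.1.le

theorem bruhatLE_antisymm {u w : W} (huw : bruhatLE cs u w) (hwu : bruhatLE cs w u) : u = w := by
  rcases huw.cases_tail with h | ⟨z, huz, hlt, -⟩
  · exact h.symm
  · have := cs.length_le_of_bruhatLE huz
    have := cs.length_le_of_bruhatLE hwu
    omega

theorem bruhatLE_mul_of_length_lt {u t : W} (ht : cs.IsReflection t) (h : ℓ u < ℓ (u * t)) :
    bruhatLE cs u (u * t) :=
  .single ⟨h, t, ht, rfl⟩

theorem bruhatLE_simple_mul_self {x : W} {i : B} (hx : ¬cs.IsLeftDescent x i) :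
    bruhatLE cs x (s i * x) := by
  have ht : cs.IsReflection (x⁻¹ * s i * x) := by
    simpa using (cs.isReflection_simple i).conj x⁻¹
  have hmul : x * (x⁻¹ * s i * x) = s i * x := by group
  rw [← hmul]
  exact cs.bruhatLE_mul_of_length_lt ht (by
    rw [hmul, cs.not_isLeftDescent_iff.mp hx]; omega)

theorem simple_mul_bruhatLE_self {x : W} {i : B} (hx : cs.IsLeftDescent x i) :
    bruhatLE cs (s i * x) x := by
  rw [isLeftDescent_iff_not_isLeftDescent_mul] at hx
  simpa using cs.bruhatLE_simple_mul_self hx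

theorem wordProd_eraseIdx_bruhatLE {ω : List B} (hω : cs.IsReduced ω) (j : ℕ) :
    bruhatLE cs (π (ω.eraseIdx j)) (π ω) := by
  rcases lt_or_ge j ω.length with hj | hj
  · set t := (ris ω).getD j 1 with ht_def
    have ht : cs.IsReflection t :=
      cs.isReflection_of_mem_rightInvSeq ω (by
        rw [ht_def, List.getD_eq_getElem _ _ (by simpa using hj)]; exact List.getElem_mem _)
    have hmul : π (ω.eraseIdx j) * t = π ω := by
      rw [← wordProd_mul_getD_rightInvSeq, mul_assoc, getD_rightInvSeq_mul_self, mul_one]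
    rw [← hmul]
    refine cs.bruhatLE_mul_of_length_lt ht ?_
    calc ℓ (π (ω.eraseIdx j)) ≤ (ω.eraseIdx j).length := cs.length_wordProd_le _
      _ < ω.length := by rw [List.length_eraseIdx_of_lt hj]; omega
      _ = ℓ (π (ω.eraseIdx j) * t) := by rw [hmul, hω]
  · rw [List.eraseIdx_of_length_le hj]
    exact .refl

theorem eq_simple_mul_or_simple_mul_bruhatLE_simple_mul {y z t : W} (i : B)
    (ht : cs.IsReflection t) (hyz : y = z * t) (hz : ℓ z < ℓ y) :
    z = s i * y ∨ bruhatLE cs (s i * z) (s i * y) := by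
  obtain ⟨ω, hω, hπω⟩ := cs.exists_isReduced (s i * y)
  have hy' : y = π (i :: ω) := by rw [wordProd_cons, ← hπω, simple_mul_simple_cancel_left]
  have hz' : z = y * t := by rw [hyz, mul_assoc, ht.mul_self, mul_one]
  obtain ⟨j, -, hj⟩ := cs.exists_wordProd_mul_eq_eraseIdx ht (by rwa [← hy', ← hz'])
  rw [← hy', ← hz'] at hj
  cases j with
  | zero => exact .inl (by rw [hj, hπω]; rfl)
  | succ j =>
    right
    rw [hj, List.eraseIdx_cons_succ, wordProd_cons, simple_mul_simple_cancel_left, hπω]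
    exact cs.wordProd_eraseIdx_bruhatLE hω j

theorem simple_mul_bruhatLE_or_simple_mul_bruhatLE_simple_mul {x y : W} (i : B)
    (h : bruhatLE cs x y) : bruhatLE cs (s i * x) y ∨ bruhatLE cs (s i * x) (s i * y) := by
  induction h with
  | refl => exact .inr .refl
  | @tail z y hxz hstep ih =>
    obtain ⟨hz, t, ht, hyz⟩ := hstep
    rcases cs.eq_simple_mul_or_simple_mul_bruhatLE_simple_mul i ht hyz hz with rfl | hsz
    · rw [simple_mul_simple_cancel_left] at ih
      exact ih.symm
    · have hzy : bruhatLE cs z y := hyz ▸ cs.bruhatLE_mul_of_length_lt ht (hyz ▸ hz)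
      exact ih.imp (·.trans hzy) (·.trans hsz)

theorem bruhatLE_simple_mul_or_simple_mul_bruhatLE_simple_mul {x y : W} (i : B)
    (h : bruhatLE cs x y) : bruhatLE cs x (s i * y) ∨ bruhatLE cs (s i * x) (s i * y) := by
  induction h with
  | refl => exact .inr .refl
  | @tail z y hxz hstep ih =>
    obtain ⟨hz, t, ht, hyz⟩ := hstep
    rcases cs.eq_simple_mul_or_simple_mul_bruhatLE_simple_mul i ht hyz hz with rfl | hsz
    · exact .inl hxz
    · exact ih.imp (·.trans hsz) (·.trans hsz)

theorem simple_mul_bruhatLE_simple_mul_of_isLeftDescent {x y : W} {i : B} (h : bruhatLE cs x y)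
    (hx : cs.IsLeftDescent x i) : bruhatLE cs (s i * x) (s i * y) :=
  (cs.bruhatLE_simple_mul_or_simple_mul_bruhatLE_simple_mul i h).elim
    (cs.simple_mul_bruhatLE_self hx).trans id

theorem bruhatLE_simple_mul_of_not_isLeftDescent {x y : W} {i : B} (h : bruhatLE cs x y)
    (hx : ¬cs.IsLeftDescent x i) : bruhatLE cs x (s i * y) :=
  (cs.bruhatLE_simple_mul_or_simple_mul_bruhatLE_simple_mul i h).elim id
    (cs.bruhatLE_simple_mul_self hx).trans

theorem simple_mul_bruhatLE_simple_mul_of_not_isLeftDescent {x y : W} {i : B}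
    (h : bruhatLE cs x y) (hy : ¬cs.IsLeftDescent y i) : bruhatLE cs (s i * x) (s i * y) :=
  (cs.simple_mul_bruhatLE_or_simple_mul_bruhatLE_simple_mul i h).elim
    (·.trans (cs.bruhatLE_simple_mul_self hy)) id

variable {cs} in
theorem _root_.IsMinCosetRep.not_isLeftDescent {I : Set B} {ς : W} (hς : IsMinCosetRep cs I ς)
    {i : B} (hi : i ∈ I) : ¬cs.IsLeftDescent ς i :=
  not_lt.mpr (hς _ (cs.simple_mem_parabolic hi))

theorem exists_mem_parabolic_of_bruhatLE_wordProd_mul {I : Set B} {ς : W}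
    (hς : ∀ i ∈ I, ¬cs.IsLeftDescent ς i) {ω : List B} (hω : cs.IsReduced ω)
    (hωI : ∀ i ∈ ω, i ∈ I) {u : W} (hu : bruhatLE cs u (π ω * ς)) (hςu : bruhatLE cs ς u) :
    ∃ v ∈ parabolic cs I, bruhatLE cs v (π ω) ∧ u = v * ς := by
  induction ω generalizing u with
  | nil =>
    rw [wordProd_nil, one_mul] at hu
    exact ⟨1, one_mem _, .refl, by rw [one_mul, cs.bruhatLE_antisymm hu hςu]⟩
  | cons i ω ih =>
    have hi : i ∈ I := hωI i List.mem_cons_self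
    have hω' : cs.IsReduced ω := by simpa using hω.drop 1
    have hωI' : ∀ j ∈ ω, j ∈ I := fun j hj => hωI j (List.mem_cons_of_mem i hj)
    have hdesc : ¬cs.IsLeftDescent (π ω) i := by
      have := cs.length_wordProd_le ω
      rw [IsReduced, wordProd_cons, List.length_cons] at hω
      rw [IsLeftDescent]
      omega
    rw [wordProd_cons] at hu ⊢
    by_cases hui : cs.IsLeftDescent u i
    · obtain ⟨v, hv, hvω, hsu⟩ := ih hω' hωI'
        (by simpa [mul_assoc] using cs.simple_mul_bruhatLE_simple_mul_of_isLeftDescent hu hui)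
        (cs.bruhatLE_simple_mul_of_not_isLeftDescent hςu (hς i hi))
      refine ⟨s i * v, mul_mem (cs.simple_mem_parabolic hi) hv,
        cs.simple_mul_bruhatLE_simple_mul_of_not_isLeftDescent hvω hdesc, ?_⟩
      rw [mul_assoc, ← hsu, simple_mul_simple_cancel_left]
    · obtain ⟨v, hv, hvω, rfl⟩ := ih hω' hωI'
        (by simpa [mul_assoc] using cs.bruhatLE_simple_mul_of_not_isLeftDescent hu hui) hςu
      exact ⟨v, hv, hvω.trans (cs.bruhatLE_simple_mul_self hdesc), rfl⟩

end CoxeterSystem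

/-- If ς is a minimal length right coset representative of W_I, u ≤ wς with w ∈ W_I,
and ς ≤ u, then there is a unique v ∈ W_I with v ≤ w and u = vς. -/
theorem existsUnique_of_le_mul_minCosetRep (cs : CoxeterSystem M W) (I : Set B) (ς : W)
    (hς : IsMinCosetRep cs I ς) (u w : W) (hw : w ∈ parabolic cs I)
    (hu : bruhatLE cs u (w * ς)) (hςu : bruhatLE cs ς u) :
    ∃! v, v ∈ parabolic cs I ∧ bruhatLE cs v w ∧ u = v * ς := by
  obtain ⟨ω, hωI, hω, rfl⟩ := cs.exists_isReduced_of_mem_parabolic hw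
  obtain ⟨v, hv, hvω, rfl⟩ := cs.exists_mem_parabolic_of_bruhatLE_wordProd_mul
    (fun i hi => hς.not_isLeftDescent hi) hω hωI hu hςu
  exact ⟨v, ⟨hv, hvω, rfl⟩, fun v' ⟨_, _, hv'⟩ => mul_right_cancel hv'.symm⟩
end
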